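/- Let H be a quasi-Hopf algebra, Q = H/I a quotient quasibialgebra with finite-dimensional Q, and ν: H → Q the projection. Define φ̄: Q⊗Q → Q⊗Q by p⊗q ↦ p·ν(S(φ⁻¹⁽¹⁾)αφ⁻¹⁽²⁾)·q₍₁₎ ⊗ q₍₂₎. Then (ν⊗ν)∘φ = φ̄∘(ν⊗ν), where φ: H⊗H → H⊗H is Drinfeld's canonical map g⊗h ↦ gS(φ⁻¹⁽¹⁾)αφ⁻¹⁽²⁾h₍₁₎ ⊗ φ⁻¹⁽³⁾h₍₂₎; consequently φ̄ is surjective, hence bijective. -/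

import Mathlib

open TensorProduct LinearMap

/-- A quasibialgebra over a field `k`. -/
structure QuasiBialgebra (k : Type*) [Field k] (H : Type*) [Ring H] [Algebra k H] where
  comul : H →ₐ[k] H ⊗[k] H
  counit : H →ₐ[k] k
  assoc : H ⊗[k] (H ⊗[k] H)
  assocInv : H ⊗[k] (H ⊗[k] H)
  assoc_mul_inv : assoc * assocInv = 1
  inv_mul_assoc : assocInv * assoc = 1
  counit_comul_left : ∀ h : H,
    (TensorProduct.lid k H) ((LinearMap.rTensor H counit.toLinearMap) (comul h)) = h
  counit_comul_right : ∀ h : H,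
    (TensorProduct.rid k H) ((LinearMap.lTensor H counit.toLinearMap) (comul h)) = h
  quasi_coassoc : ∀ h : H,
    (Algebra.TensorProduct.map (AlgHom.id k H) comul) (comul h) * assoc
      = assoc * (Algebra.TensorProduct.assoc k k k H H H)
          ((Algebra.TensorProduct.map comul (AlgHom.id k H)) (comul h))
  pentagon :
    (Algebra.TensorProduct.map (AlgHom.id k H)
        (Algebra.TensorProduct.map (AlgHom.id k H) comul)) assoc
      * (Algebra.TensorProduct.assoc k k k H H (H ⊗[k] H))
          ((Algebra.TensorProduct.map comul (AlgHom.id k (H ⊗[k] H))) assoc)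
    = (1 : H) ⊗ₜ[k] assoc
      * (Algebra.TensorProduct.map (AlgHom.id k H)
          ((Algebra.TensorProduct.assoc k k k H H H).toAlgHom.comp
            (Algebra.TensorProduct.map comul (AlgHom.id k H)))) assoc
      * (Algebra.TensorProduct.map (AlgHom.id k H)
          (Algebra.TensorProduct.assoc k k k H H H).toAlgHom)
          ((Algebra.TensorProduct.assoc k k k H (H ⊗[k] H) H) (assoc ⊗ₜ[k] (1 : H)))
  counit_mid :
    (Algebra.TensorProduct.map (AlgHom.id k H)
        ((Algebra.TensorProduct.lid k H).toAlgHom.comp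
          (Algebra.TensorProduct.map counit (AlgHom.id k H)))) assoc = 1

variable {k : Type*} [Field k] {H : Type*} [Ring H] [Algebra k H]

/-- The quasi-antipode axioms for a quasibialgebra. -/
structure IsQuasiAntipode (qb : QuasiBialgebra k H) (S : H →ₗ[k] H) (α β : H) : Prop where
  map_one : S 1 = 1
  map_mul : ∀ a b : H, S (a * b) = S b * S a
  antipode_left : ∀ h : H,
    LinearMap.mul' k H ((TensorProduct.map (LinearMap.mulRight k α ∘ₗ S) LinearMap.id)
      (qb.comul h)) = qb.counit h • α
  antipode_right : ∀ h : H,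
    LinearMap.mul' k H ((TensorProduct.map LinearMap.id (LinearMap.mulLeft k β ∘ₗ S))
      (qb.comul h)) = qb.counit h • β
  assoc_antipode :
    LinearMap.mul' k H ((TensorProduct.map (LinearMap.mulRight k β)
        (LinearMap.mul' k H ∘ₗ TensorProduct.map (LinearMap.mulRight k α ∘ₗ S) LinearMap.id))
      qb.assoc) = 1
  assocInv_antipode :
    LinearMap.mul' k H ((TensorProduct.map (LinearMap.mulRight k α ∘ₗ S)
        (LinearMap.mul' k H ∘ₗ TensorProduct.map (LinearMap.mulRight k β) S))
      qb.assocInv) = 1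

/-- A quasi-Hopf algebra. -/
structure QuasiHopf (k : Type*) [Field k] (H : Type*) [Ring H] [Algebra k H]
    extends QuasiBialgebra k H where
  antipode : H →ₗ[k] H
  alpha : H
  beta : H
  isQuasiAntipode : IsQuasiAntipode toQuasiBialgebra antipode alpha beta

/-- The element `w = Σ S(φ⁻¹⁽¹⁾)·α·φ⁻¹⁽²⁾ ⊗ φ⁻¹⁽³⁾` of `H ⊗ H`. -/
noncomputable def drinfeldW (qh : QuasiHopf k H) : H ⊗[k] H :=
  (LinearMap.rTensor H
      (LinearMap.mul' k H ∘ₗ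
        TensorProduct.map (LinearMap.mulRight k qh.alpha ∘ₗ qh.antipode) LinearMap.id))
    ((TensorProduct.assoc k H H H).symm qh.assocInv)

/-- Drinfeld's canonical map `g ⊗ h ↦ g·S(φ⁻¹⁽¹⁾)·α·φ⁻¹⁽²⁾·h₍₁₎ ⊗ φ⁻¹⁽³⁾·h₍₂₎`. -/
noncomputable def drinfeldCan (qh : QuasiHopf k H) : H ⊗[k] H →ₗ[k] H ⊗[k] H :=
  LinearMap.rTensor H (LinearMap.mul' k H)
    ∘ₗ (TensorProduct.assoc k H H H).symm.toLinearMap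
    ∘ₗ LinearMap.lTensor H (LinearMap.mulLeft k (drinfeldW qh) ∘ₗ qh.comul.toLinearMap)

/-- `h ↦ Σ φ⁽¹⁾·β·S(h₍₁₎·φ⁽²⁾) ⊗ h₍₂₎·φ⁽³⁾`. -/
noncomputable def drinfeldInvAux (qh : QuasiHopf k H) : H →ₗ[k] H ⊗[k] H :=
  LinearMap.rTensor H
      (LinearMap.mul' k H ∘ₗ TensorProduct.map (LinearMap.mulRight k qh.beta) qh.antipode)
    ∘ₗ (TensorProduct.assoc k H H H).symm.toLinearMap
    ∘ₗ LinearMap.mulRight k qh.assoc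
    ∘ₗ (TensorProduct.mk k H (H ⊗[k] H)) 1
    ∘ₗ qh.comul.toLinearMap

/-- The inverse of Drinfeld's canonical map:
`g ⊗ h ↦ g·φ⁽¹⁾·β·S(h₍₁₎·φ⁽²⁾) ⊗ h₍₂₎·φ⁽³⁾`. -/
noncomputable def drinfeldCanInv (qh : QuasiHopf k H) : H ⊗[k] H →ₗ[k] H ⊗[k] H :=
  LinearMap.rTensor H (LinearMap.mul' k H)
    ∘ₗ (TensorProduct.assoc k H H H).symm.toLinearMap
    ∘ₗ LinearMap.lTensor H (drinfeldInvAux qh)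

variable {Q : Type*} [Ring Q] [Algebra k Q]

/-- The map `φ̄ : Q⊗Q → Q⊗Q` induced on the quotient by Drinfeld's canonical map. -/
noncomputable def quotCan (qh : QuasiHopf k H) (ν : H →ₐ[k] Q) (comulQ : Q →ₐ[k] Q ⊗[k] Q) :
    Q ⊗[k] Q →ₗ[k] Q ⊗[k] Q :=
  LinearMap.rTensor Q (LinearMap.mul' k Q)
    ∘ₗ (TensorProduct.assoc k Q Q Q).symm.toLinearMap
    ∘ₗ LinearMap.lTensor Q
        (LinearMap.mulLeft k ((Algebra.TensorProduct.map ν ν) (drinfeldW qh))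
          ∘ₗ comulQ.toLinearMap)

/-!
`ν` is an algebra map intertwining the comultiplications, so it carries
`w = S(φ⁻¹⁽¹⁾) α φ⁻¹⁽²⁾ ⊗ φ⁻¹⁽³⁾` and `Δ` to their counterparts on `Q`: this is the commuting
square. As `ν ⊗ ν` is onto, `φ̄` is onto as soon as Drinfeld's map is, and the latter has the
right inverse `g ⊗ h ↦ g φ⁽¹⁾ β S(h₍₁₎ φ⁽²⁾) ⊗ h₍₂₎ φ⁽³⁾`. By quasi-coassociativity and
`S(h₍₁₎) α h₍₂₎ = ε(h) α`, checking this reduces to `φ⁽¹⁾ β S(φ⁽²⁾) · w · Δ(φ⁽³⁾) = 1`, which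
follows from the pentagon, the quasi-antipode axioms for `φ`, and `(ε ⊗ id ⊗ id) φ⁻¹ = 1`.
A surjective endomorphism of the finite-dimensional space `Q ⊗ Q` is bijective.
-/

section TensorAlgebra
variable {A : Type*} [Ring A] [Algebra k A]

theorem rTensor_mul'_assoc_symm_tmul (g : A) (m : A ⊗[k] A) :
    rTensor A (mul' k A) ((TensorProduct.assoc k A A A).symm (g ⊗ₜ m)) = (g ⊗ₜ[k] (1 : A)) * m := by
  induction m using TensorProduct.induction_on with
  | zero => simp
  | tmul p q => simp [Algebra.TensorProduct.tmul_mul_tmul]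
  | add u v hu hv => simp only [tmul_add, map_add, hu, hv, mul_add]

end TensorAlgebra

/- `mul_add`, `mul_zero` and `mul_assoc` do not fire on some products in
`H ⊗[k] (H ⊗[k] (H ⊗[k] H))`: unifying their instance arguments needs nested instance
synthesis. Stated for `A ⊗[k] B` they apply by plain unification. -/
section TensorRing
variable {A B : Type*} [Ring A] [Algebra k A] [Ring B] [Algebra k B] (a b c : A ⊗[k] B)

theorem tensor_mul_add : a * (b + c) = a * b + a * c := mul_add a b c
theorem tensor_mul_zero : a * 0 = 0 := mul_zero a
theorem tensor_mul_assoc : a * b * c = a * (b * c) := mul_assoc a b c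

end TensorRing

section LeftContract
variable (S : H →ₗ[k] H) (α : H)

noncomputable def leftContract : H ⊗[k] (H ⊗[k] H) →ₗ[k] H ⊗[k] H :=
  rTensor H (mul' k H ∘ₗ TensorProduct.map (mulRight k α ∘ₗ S) LinearMap.id) ∘ₗ
    (TensorProduct.assoc k H H H).symm.toLinearMap

@[simp] theorem leftContract_tmul_tmul (a b c : H) :
    leftContract S α (a ⊗ₜ (b ⊗ₜ c)) = (S a * α * b) ⊗ₜ c := by
  simp [leftContract, mul_assoc]

theorem leftContract_tmul (a : H) (m : H ⊗[k] H) :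
    leftContract S α (a ⊗ₜ m) = ((S a * α) ⊗ₜ[k] (1 : H)) * m := by
  induction m using TensorProduct.induction_on with
  | zero => simp
  | tmul b c => simp [Algebra.TensorProduct.tmul_mul_tmul]
  | add u v hu hv => simp only [tmul_add, map_add, hu, hv, mul_add]

theorem leftContract_assoc_tmul (m : H ⊗[k] H) (c : H) :
    leftContract S α (Algebra.TensorProduct.assoc k k k H H H (m ⊗ₜ c))
      = mul' k H (TensorProduct.map (mulRight k α ∘ₗ S) LinearMap.id m) ⊗ₜ c := by
  induction m using TensorProduct.induction_on with
  | zero => simp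
  | tmul a b => simp
  | add u v hu hv => simp only [add_tmul, map_add, hu, hv]

variable {S} (hS : ∀ a b : H, S (a * b) = S b * S a)
include hS

theorem leftContract_mul_tmul (x : H ⊗[k] (H ⊗[k] H)) (b : H) (m : H ⊗[k] H) :
    leftContract S α (x * (b ⊗ₜ m)) = (S b ⊗ₜ[k] (1 : H)) * leftContract S α x * m := by
  induction x using TensorProduct.induction_on with
  | zero => simp
  | add u v hu hv => rw [add_mul, map_add, map_add, hu, hv, mul_add, add_mul]
  | tmul a n =>
    rw [Algebra.TensorProduct.tmul_mul_tmul, leftContract_tmul S α, leftContract_tmul S α, hS,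
      ← mul_assoc (S b ⊗ₜ[k] (1 : H)), Algebra.TensorProduct.tmul_mul_tmul, one_mul,
      mul_assoc (S b), mul_assoc]

theorem leftContract_mul_of_eq_tmul {y : H ⊗[k] (H ⊗[k] H)} {v : H}
    (hy : leftContract S α y = α ⊗ₜ[k] v) (x : H ⊗[k] (H ⊗[k] H)) :
    leftContract S α (y * x) = ((1 : H) ⊗ₜ[k] v) * leftContract S α x := by
  induction x using TensorProduct.induction_on with
  | zero => simp
  | add u w hu hw => rw [mul_add, map_add, map_add, hu, hw, mul_add]
  | tmul a n =>
    rw [leftContract_mul_tmul α hS, hy, leftContract_tmul S α, ← mul_assoc,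
      Algebra.TensorProduct.tmul_mul_tmul, Algebra.TensorProduct.tmul_mul_tmul, one_mul,
      one_mul, mul_one]

variable {Δ : H →ₐ[k] H ⊗[k] H} {ε : H →ₐ[k] k}
  (hα : ∀ u, mul' k H (TensorProduct.map (mulRight k α ∘ₗ S) LinearMap.id (Δ u)) = ε u • α)
include hα

theorem leftContract_assoc_comul_tmul_mul (u v : H) (x : H ⊗[k] (H ⊗[k] H)) :
    leftContract S α (Algebra.TensorProduct.assoc k k k H H H (Δ u ⊗ₜ v) * x)
      = ((1 : H) ⊗ₜ[k] (ε u • v)) * leftContract S α x := by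
  refine leftContract_mul_of_eq_tmul α hS ?_ x
  rw [leftContract_assoc_tmul, hα, TensorProduct.smul_tmul]

theorem leftContract_assoc_map_comul_mul (m : H ⊗[k] H) (x : H ⊗[k] (H ⊗[k] H)) :
    leftContract S α (Algebra.TensorProduct.assoc k k k H H H
        (Algebra.TensorProduct.map Δ (AlgHom.id k H) m) * x)
      = ((1 : H) ⊗ₜ[k] TensorProduct.lid k H (rTensor H ε.toLinearMap m))
          * leftContract S α x := by
  induction m using TensorProduct.induction_on with
  | zero => simp
  | add u v hu hv => simp only [map_add, add_mul, hu, hv, tmul_add]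
  | tmul u v => simpa using leftContract_assoc_comul_tmul_mul α hS hα u v x

end LeftContract

noncomputable def rightContract (S : H →ₗ[k] H) (β : H) : H ⊗[k] (H ⊗[k] H) →ₗ[k] H ⊗[k] H :=
  rTensor H (mul' k H ∘ₗ TensorProduct.map (mulRight k β) S) ∘ₗ
    (TensorProduct.assoc k H H H).symm.toLinearMap

@[simp] theorem rightContract_tmul_tmul (S : H →ₗ[k] H) (β a b c : H) :
    rightContract S β (a ⊗ₜ (b ⊗ₜ c)) = (a * β * S b) ⊗ₜ c := by
  simp [rightContract, mul_assoc]

section PrefixMul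
variable (β : H) (f : H ⊗[k] (H ⊗[k] H) →ₗ[k] H ⊗[k] H)

noncomputable def prefixMul : H ⊗[k] (H ⊗[k] (H ⊗[k] H)) →ₗ[k] H ⊗[k] H :=
  TensorProduct.lift (LinearMap.mul k (H ⊗[k] H) ∘ₗ
    (Algebra.TensorProduct.includeLeft : H →ₐ[k] H ⊗[k] H).toLinearMap ∘ₗ mulRight k β) ∘ₗ
    lTensor H f

@[simp] theorem prefixMul_tmul (p : H) (t : H ⊗[k] (H ⊗[k] H)) :
    prefixMul β f (p ⊗ₜ t) = ((p * β) ⊗ₜ[k] (1 : H)) * f t := by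
  simp [prefixMul]

theorem prefixMul_one_tmul_mul (y : H ⊗[k] (H ⊗[k] H)) (r : H ⊗[k] (H ⊗[k] (H ⊗[k] H))) :
    prefixMul β f (((1 : H) ⊗ₜ y) * r) = prefixMul β (f ∘ₗ mulLeft k y) r := by
  have key : prefixMul β f ∘ₗ mulLeft k ((1 : H) ⊗ₜ[k] y) = prefixMul β (f ∘ₗ mulLeft k y) :=
    TensorProduct.ext' fun p t => by simp [Algebra.TensorProduct.tmul_mul_tmul]
  exact LinearMap.congr_fun key r

theorem prefixMul_mulLeft_one_tmul (h : H) (r : H ⊗[k] (H ⊗[k] (H ⊗[k] H))) :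
    prefixMul β (mulLeft k ((1 : H) ⊗ₜ[k] h) ∘ₗ f) r = ((1 : H) ⊗ₜ h) * prefixMul β f r := by
  have key : prefixMul β (mulLeft k ((1 : H) ⊗ₜ[k] h) ∘ₗ f)
      = mulLeft k ((1 : H) ⊗ₜ[k] h) ∘ₗ prefixMul β f :=
    TensorProduct.ext' fun p t => by
      simp only [prefixMul_tmul, comp_apply, mulLeft_apply, ← mul_assoc,
        Algebra.TensorProduct.tmul_mul_tmul, one_mul, mul_one]
  exact LinearMap.congr_fun key r

end PrefixMul

namespace QuasiBialgebra
variable (qb : QuasiBialgebra k H)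

noncomputable def counitId : H ⊗[k] H →ₗ[k] H :=
  (TensorProduct.lid k H).toLinearMap ∘ₗ rTensor H qb.counit.toLinearMap

noncomputable def counitIdId : H ⊗[k] (H ⊗[k] H) →ₐ[k] H ⊗[k] H :=
  (Algebra.TensorProduct.lid k (H ⊗[k] H)).toAlgHom.comp
    (Algebra.TensorProduct.map qb.counit (AlgHom.id k (H ⊗[k] H)))

noncomputable def counitCounitIdId : H ⊗[k] (H ⊗[k] (H ⊗[k] H)) →ₐ[k] H ⊗[k] H :=
  qb.counitIdId.comp ((Algebra.TensorProduct.lid k (H ⊗[k] (H ⊗[k] H))).toAlgHom.comp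
    (Algebra.TensorProduct.map qb.counit (AlgHom.id k (H ⊗[k] (H ⊗[k] H)))))

@[simp] theorem counitId_tmul (a b : H) : qb.counitId (a ⊗ₜ b) = qb.counit a • b := by
  simp [counitId]

@[simp] theorem counitIdId_tmul (a : H) (m : H ⊗[k] H) :
    qb.counitIdId (a ⊗ₜ m) = qb.counit a • m := by
  simp [counitIdId]

@[simp] theorem counitCounitIdId_tmul (a : H) (t : H ⊗[k] (H ⊗[k] H)) :
    qb.counitCounitIdId (a ⊗ₜ t) = qb.counit a • qb.counitIdId t := by
  simp [counitCounitIdId]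

theorem counitId_comul (h : H) : qb.counitId (qb.comul h) = h := qb.counit_comul_left h

theorem counitIdId_assoc_tmul (m : H ⊗[k] H) (c : H) :
    qb.counitIdId (Algebra.TensorProduct.assoc k k k H H H (m ⊗ₜ c)) = qb.counitId m ⊗ₜ c := by
  induction m using TensorProduct.induction_on with
  | zero => simp
  | add u v hu hv => simp only [add_tmul, map_add, hu, hv]
  | tmul a b => simp [TensorProduct.smul_tmul']

theorem counitCounitIdId_map_id_map_id_comul (t : H ⊗[k] (H ⊗[k] H)) :
    qb.counitCounitIdId (Algebra.TensorProduct.map (AlgHom.id k H)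
        (Algebra.TensorProduct.map (AlgHom.id k H) qb.comul) t)
      = qb.comul (qb.counitId (qb.counitIdId t)) := by
  induction t using TensorProduct.induction_on with
  | zero => simp
  | add u v hu hv => simp only [map_add, hu, hv]
  | tmul a m =>
    induction m using TensorProduct.induction_on with
    | zero => simp
    | add u v hu hv => simp only [tmul_add, map_add] at hu hv ⊢; rw [hu, hv]
    | tmul b c => simp [smul_smul]

theorem counitCounitIdId_assoc_map_comul_id (t : H ⊗[k] (H ⊗[k] H)) :
    qb.counitCounitIdId (Algebra.TensorProduct.assoc k k k H H (H ⊗[k] H)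
        (Algebra.TensorProduct.map qb.comul (AlgHom.id k (H ⊗[k] H)) t))
      = qb.counitIdId t := by
  induction t using TensorProduct.induction_on with
  | zero => simp
  | add u v hu hv => simp only [map_add, hu, hv]
  | tmul a m =>
    suffices ∀ μ : H ⊗[k] H, qb.counitCounitIdId
        (Algebra.TensorProduct.assoc k k k H H (H ⊗[k] H) (μ ⊗ₜ m))
          = qb.counit (qb.counitId μ) • m by
      simp [this, counitId_comul]
    intro μ
    induction μ using TensorProduct.induction_on with
    | zero => simp
    | add u v hu hv => simp only [add_tmul, map_add, hu, hv, add_smul]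
    | tmul u v => simp [smul_smul]

theorem counitCounitIdId_map_id_assoc_map_comul_id (t : H ⊗[k] (H ⊗[k] H)) :
    qb.counitCounitIdId (Algebra.TensorProduct.map (AlgHom.id k H)
        ((Algebra.TensorProduct.assoc k k k H H H).toAlgHom.comp
          (Algebra.TensorProduct.map qb.comul (AlgHom.id k H))) t)
      = qb.counitIdId t := by
  induction t using TensorProduct.induction_on with
  | zero => simp
  | add u v hu hv => simp only [map_add, hu, hv]
  | tmul a m =>
    suffices qb.counitIdId (Algebra.TensorProduct.assoc k k k H H H
        (Algebra.TensorProduct.map qb.comul (AlgHom.id k H) m)) = m by simp [this]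
    induction m using TensorProduct.induction_on with
    | zero => simp
    | add u v hu hv => simp only [map_add, hu, hv]
    | tmul b c => simp [counitIdId_assoc_tmul, counitId_comul]

theorem counitCounitIdId_map_id_assoc_assoc_tmul_one (t : H ⊗[k] (H ⊗[k] H)) :
    qb.counitCounitIdId (Algebra.TensorProduct.map (AlgHom.id k H)
        (Algebra.TensorProduct.assoc k k k H H H).toAlgHom
        (Algebra.TensorProduct.assoc k k k H (H ⊗[k] H) H (t ⊗ₜ (1 : H))))
      = qb.counitId (qb.counitIdId t) ⊗ₜ (1 : H) := by
  induction t using TensorProduct.induction_on with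
  | zero => simp
  | add u v hu hv => simp only [add_tmul, map_add, hu, hv]
  | tmul a m =>
    simp [counitIdId_assoc_tmul, TensorProduct.smul_tmul']

theorem counitId_counitIdId_assoc : qb.counitId (qb.counitIdId qb.assoc) = 1 := by
  have hswap : ∀ t : H ⊗[k] (H ⊗[k] H), qb.counitId (qb.counitIdId t)
      = qb.counitId (Algebra.TensorProduct.map (AlgHom.id k H)
          ((Algebra.TensorProduct.lid k H).toAlgHom.comp
            (Algebra.TensorProduct.map qb.counit (AlgHom.id k H))) t) := by
    intro t
    induction t using TensorProduct.induction_on with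
    | zero => simp
    | add u v hu hv => simp only [map_add, hu, hv]
    | tmul a m =>
      induction m using TensorProduct.induction_on with
      | zero => simp
      | add u v hu hv => simp only [tmul_add, map_add, hu, hv]
      | tmul b c => simp [smul_smul, mul_comm]
  rw [hswap, qb.counit_mid, Algebra.TensorProduct.one_def, counitId_tmul, map_one, one_smul]

/-- Under `ε ⊗ ε ⊗ id ⊗ id` the pentagon becomes `E = E * E` for `E = (ε ⊗ id ⊗ id) φ`,
and `E` is invertible. -/
theorem counitIdId_assoc : qb.counitIdId qb.assoc = 1 := by
  have hp := congrArg qb.counitCounitIdId qb.pentagon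
  rw [map_mul, map_mul, map_mul, counitCounitIdId_map_id_map_id_comul,
    counitCounitIdId_assoc_map_comul_id, counitCounitIdId_tmul, map_one, one_smul,
    counitCounitIdId_map_id_assoc_map_comul_id, counitCounitIdId_map_id_assoc_assoc_tmul_one,
    counitId_counitIdId_assoc, map_one, ← Algebra.TensorProduct.one_def, one_mul,
    mul_one] at hp
  have hinv : qb.counitIdId qb.assoc * qb.counitIdId qb.assocInv = 1 := by
    rw [← map_mul, qb.assoc_mul_inv, map_one]
  calc qb.counitIdId qb.assoc
      = qb.counitIdId qb.assoc * qb.counitIdId qb.assoc * qb.counitIdId qb.assocInv := by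
        rw [mul_assoc, hinv, mul_one]
    _ = 1 := by rw [← hp, hinv]

theorem counitIdId_assocInv : qb.counitIdId qb.assocInv = 1 := by
  calc qb.counitIdId qb.assocInv = qb.counitIdId qb.assoc * qb.counitIdId qb.assocInv := by
        rw [counitIdId_assoc, one_mul]
    _ = 1 := by rw [← map_mul, qb.assoc_mul_inv, map_one]

end QuasiBialgebra

section Drinfeld
variable (qh : QuasiHopf k H)

theorem drinfeldW_eq_leftContract :
    drinfeldW qh = leftContract qh.antipode qh.alpha qh.assocInv := rfl

theorem drinfeldCan_tmul (g h : H) :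
    drinfeldCan qh (g ⊗ₜ h) = (g ⊗ₜ[k] (1 : H)) * (drinfeldW qh * qh.comul h) := by
  simp only [drinfeldCan, comp_apply, lTensor_tmul]
  exact rTensor_mul'_assoc_symm_tmul _ _

theorem drinfeldCan_tmul_one_mul (g : H) (t : H ⊗[k] H) :
    drinfeldCan qh ((g ⊗ₜ[k] (1 : H)) * t) = (g ⊗ₜ[k] (1 : H)) * drinfeldCan qh t := by
  induction t using TensorProduct.induction_on with
  | zero => simp
  | add u v hu hv => rw [mul_add, map_add, map_add, hu, hv, mul_add]
  | tmul p q =>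
    rw [Algebra.TensorProduct.tmul_mul_tmul, one_mul, drinfeldCan_tmul, drinfeldCan_tmul,
      ← mul_assoc (g ⊗ₜ[k] (1 : H)), Algebra.TensorProduct.tmul_mul_tmul, mul_one]

theorem drinfeldInvAux_eq_rightContract (h : H) :
    drinfeldInvAux qh h
      = rightContract qh.antipode qh.beta (((1 : H) ⊗ₜ qh.comul h) * qh.assoc) := rfl

theorem drinfeldCanInv_tmul (g h : H) :
    drinfeldCanInv qh (g ⊗ₜ h) = (g ⊗ₜ[k] (1 : H)) * drinfeldInvAux qh h := by
  simp only [drinfeldCanInv, comp_apply, lTensor_tmul]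
  exact rTensor_mul'_assoc_symm_tmul _ _

theorem drinfeldCan_rightContract (t : H ⊗[k] (H ⊗[k] H)) :
    drinfeldCan qh (rightContract qh.antipode qh.beta t)
      = prefixMul qh.beta (leftContract qh.antipode qh.alpha ∘ₗ mulLeft k qh.assocInv)
          (Algebra.TensorProduct.map (AlgHom.id k H)
            (Algebra.TensorProduct.map (AlgHom.id k H) qh.comul) t) := by
  induction t using TensorProduct.induction_on with
  | zero => simp
  | add u v hu hv => simp only [map_add, hu, hv]
  | tmul a m =>
    induction m using TensorProduct.induction_on with
    | zero => simp
    | add u v hu hv => simp only [tmul_add, map_add, hu, hv]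
    | tmul b c =>
      rw [rightContract_tmul_tmul, drinfeldCan_tmul]
      simp only [Algebra.TensorProduct.map_tmul, AlgHom.coe_id, id_eq, prefixMul_tmul,
        comp_apply, mulLeft_apply]
      rw [leftContract_mul_tmul _ qh.isQuasiAntipode.map_mul, ← drinfeldW_eq_leftContract]
      simp only [← mul_assoc, Algebra.TensorProduct.tmul_mul_tmul, mul_one]

theorem leftContract_assocInv_mul_comul_comul (h : H) (t : H ⊗[k] (H ⊗[k] H)) :
    leftContract qh.antipode qh.alpha
        (qh.assocInv * (Algebra.TensorProduct.map (AlgHom.id k H) qh.comul (qh.comul h) * t))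
      = ((1 : H) ⊗ₜ h) * leftContract qh.antipode qh.alpha (qh.assocInv * t) := by
  have hcoassoc : qh.assocInv * Algebra.TensorProduct.map (AlgHom.id k H) qh.comul (qh.comul h)
      = Algebra.TensorProduct.assoc k k k H H H
          (Algebra.TensorProduct.map qh.comul (AlgHom.id k H) (qh.comul h)) * qh.assocInv := by
    calc _ = qh.assocInv * (Algebra.TensorProduct.map (AlgHom.id k H) qh.comul (qh.comul h)
          * qh.assoc) * qh.assocInv := by rw [mul_assoc, mul_assoc, qh.assoc_mul_inv, mul_one]
      _ = _ := by rw [qh.quasi_coassoc, ← mul_assoc, qh.inv_mul_assoc, one_mul]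
  rw [← mul_assoc, hcoassoc, mul_assoc, leftContract_assoc_map_comul_mul _
    qh.isQuasiAntipode.map_mul qh.isQuasiAntipode.antipode_left, qh.counit_comul_left]

end Drinfeld

section Pentagon
variable (qh : QuasiHopf k H)

theorem prefixMul_leftContract_map_comul_mul (n' : H ⊗[k] (H ⊗[k] H)) (p q : H)
    (n : H ⊗[k] H) :
    prefixMul qh.beta (leftContract qh.antipode qh.alpha)
        (Algebra.TensorProduct.map (AlgHom.id k H)
          ((Algebra.TensorProduct.assoc k k k H H H).toAlgHom.comp
            (Algebra.TensorProduct.map qh.comul (AlgHom.id k H))) n' * (p ⊗ₜ (q ⊗ₜ n)))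
      = Algebra.TensorProduct.map (AlgHom.id k H)
          ((Algebra.TensorProduct.lid k H).toAlgHom.comp
            (Algebra.TensorProduct.map qh.counit (AlgHom.id k H))) n'
        * ((p * qh.beta * qh.antipode q * qh.alpha) ⊗ₜ[k] (1 : H) * n) := by
  have key : prefixMul qh.beta (leftContract qh.antipode qh.alpha)
        ∘ₗ mulRight k (p ⊗ₜ[k] (q ⊗ₜ[k] n))
        ∘ₗ (Algebra.TensorProduct.map (AlgHom.id k H)
          ((Algebra.TensorProduct.assoc k k k H H H).toAlgHom.comp
            (Algebra.TensorProduct.map qh.comul (AlgHom.id k H)))).toLinearMap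
      = mulRight k ((p * qh.beta * qh.antipode q * qh.alpha) ⊗ₜ[k] (1 : H) * n)
        ∘ₗ (Algebra.TensorProduct.map (AlgHom.id k H)
          ((Algebra.TensorProduct.lid k H).toAlgHom.comp
            (Algebra.TensorProduct.map qh.counit (AlgHom.id k H)))).toLinearMap := by
    refine TensorProduct.ext_threefold' fun U V W => ?_
    simp only [comp_apply, AlgHom.toLinearMap_apply, mulRight_apply,
      Algebra.TensorProduct.map_tmul, AlgHom.coe_id, id_eq, AlgHom.coe_comp, Function.comp_apply,
      AlgEquiv.coe_toAlgHom, Algebra.TensorProduct.tmul_mul_tmul,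
      prefixMul_tmul, Algebra.TensorProduct.lid_tmul,
      leftContract_assoc_comul_tmul_mul _ qh.isQuasiAntipode.map_mul
        qh.isQuasiAntipode.antipode_left, leftContract_tmul]
    simp only [← mul_assoc, Algebra.TensorProduct.tmul_mul_tmul, mul_one, one_mul]
  exact LinearMap.congr_fun key n'

theorem prefixMul_leftContract_map_assoc_mul (r : H ⊗[k] (H ⊗[k] (H ⊗[k] H))) :
    prefixMul qh.beta (leftContract qh.antipode qh.alpha)
        (Algebra.TensorProduct.map (AlgHom.id k H)
          ((Algebra.TensorProduct.assoc k k k H H H).toAlgHom.comp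
            (Algebra.TensorProduct.map qh.comul (AlgHom.id k H))) qh.assoc * r)
      = prefixMul qh.beta (leftContract qh.antipode qh.alpha) r := by
  have key : prefixMul qh.beta (leftContract qh.antipode qh.alpha)
        ∘ₗ mulLeft k (Algebra.TensorProduct.map (AlgHom.id k H)
          ((Algebra.TensorProduct.assoc k k k H H H).toAlgHom.comp
            (Algebra.TensorProduct.map qh.comul (AlgHom.id k H))) qh.assoc)
      = prefixMul qh.beta (leftContract qh.antipode qh.alpha) :=
    TensorProduct.ext_threefold' fun p q n => by
      rw [comp_apply, mulLeft_apply, prefixMul_leftContract_map_comul_mul, qh.counit_mid,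
        one_mul, prefixMul_tmul, leftContract_tmul, ← mul_assoc,
        Algebra.TensorProduct.tmul_mul_tmul, mul_one]
      simp only [mul_assoc]
  exact LinearMap.congr_fun key r

theorem prefixMul_leftContract_tmul_tmul_tmul_one_mul (a b c : H) (μ m : H ⊗[k] H) :
    prefixMul qh.beta (leftContract qh.antipode qh.alpha)
        ((a ⊗ₜ[k] (b ⊗ₜ[k] (c ⊗ₜ[k] (1 : H))))
          * Algebra.TensorProduct.assoc k k k H H (H ⊗[k] H) (μ ⊗ₜ m))
      = ((a * mul' k H (TensorProduct.map LinearMap.id (mulLeft k qh.beta ∘ₗ qh.antipode) μ)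
          * (qh.antipode b * qh.alpha * c)) ⊗ₜ[k] (1 : H)) * m := by
  induction μ using TensorProduct.induction_on with
  | zero => simp only [zero_tmul, map_zero, tensor_mul_zero, mul_zero, zero_mul, zero_tmul]
  | add u v hu hv =>
    simp only [add_tmul, map_add, tensor_mul_add, mul_add, add_mul, hu, hv]
  | tmul u₁ u₂ =>
    rw [Algebra.TensorProduct.assoc_tmul, Algebra.TensorProduct.tmul_mul_tmul,
      Algebra.TensorProduct.tmul_mul_tmul, prefixMul_tmul, leftContract_tmul,
      qh.isQuasiAntipode.map_mul]
    simp only [TensorProduct.map_tmul, mul'_apply, comp_apply, mulLeft_apply, id_apply,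
      ← mul_assoc, Algebra.TensorProduct.tmul_mul_tmul, mul_one]

theorem prefixMul_leftContract_assoc_tmul_one_mul (n' t : H ⊗[k] (H ⊗[k] H)) :
    prefixMul qh.beta (leftContract qh.antipode qh.alpha)
        (Algebra.TensorProduct.map (AlgHom.id k H)
            (Algebra.TensorProduct.assoc k k k H H H).toAlgHom
            (Algebra.TensorProduct.assoc k k k H (H ⊗[k] H) H (n' ⊗ₜ[k] (1 : H)))
          * Algebra.TensorProduct.assoc k k k H H (H ⊗[k] H)
            (Algebra.TensorProduct.map qh.comul (AlgHom.id k (H ⊗[k] H)) t))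
      = (mul' k H (TensorProduct.map (mulRight k qh.beta) (mul' k H ∘ₗ
            TensorProduct.map (mulRight k qh.alpha ∘ₗ qh.antipode) LinearMap.id) n')
          ⊗ₜ[k] (1 : H)) * qh.counitIdId t := by
  induction n' using TensorProduct.induction_on with
  | zero => simp only [zero_tmul, map_zero, zero_mul]
  | add x y hx hy => simp only [add_tmul, map_add, hx, hy, add_mul]
  | tmul a m₃ =>
    induction m₃ using TensorProduct.induction_on with
    | zero => simp only [tmul_zero, zero_tmul, map_zero, zero_mul]
    | add x y hx hy => simp only [tmul_add, add_tmul, map_add, hx, hy, add_mul]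
    | tmul b c =>
      rw [Algebra.TensorProduct.assoc_tmul, Algebra.TensorProduct.map_tmul, AlgHom.coe_id, id_eq,
        AlgEquiv.coe_toAlgHom, Algebra.TensorProduct.assoc_tmul]
      induction t using TensorProduct.induction_on with
      | zero => simp only [map_zero, mul_zero]
      | add x y hx hy => simp only [map_add, hx, hy, mul_add]
      | tmul u m =>
        rw [Algebra.TensorProduct.map_tmul, AlgHom.coe_id, id_eq,
          prefixMul_leftContract_tmul_tmul_tmul_one_mul, qh.isQuasiAntipode.antipode_right,
          QuasiBialgebra.counitIdId_tmul]
        simp only [TensorProduct.map_tmul, mul'_apply, comp_apply, mulRight_apply, id_apply,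
          mul_smul_comm, smul_mul_assoc, ← TensorProduct.smul_tmul', mul_assoc]

/-- The identity `φ⁽¹⁾ β S(φ⁽²⁾) · w · Δ(φ⁽³⁾) = 1` (with `w = drinfeldW qh`): expand
`(id ⊗ id ⊗ Δ) φ` by the pentagon and contract the factors one at a time. -/
theorem prefixMul_leftContract_assocInv_map_comul_assoc :
    prefixMul qh.beta (leftContract qh.antipode qh.alpha ∘ₗ mulLeft k qh.assocInv)
      (Algebra.TensorProduct.map (AlgHom.id k H)
        (Algebra.TensorProduct.map (AlgHom.id k H) qh.comul) qh.assoc) = 1 := by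
  set P := Algebra.TensorProduct.map (AlgHom.id k H)
    ((Algebra.TensorProduct.assoc k k k H H H).toAlgHom.comp
      (Algebra.TensorProduct.map qh.comul (AlgHom.id k H))) qh.assoc
  set Y := Algebra.TensorProduct.map (AlgHom.id k H)
    (Algebra.TensorProduct.assoc k k k H H H).toAlgHom
    (Algebra.TensorProduct.assoc k k k H (H ⊗[k] H) H (qh.assoc ⊗ₜ[k] (1 : H)))
  set W := Algebra.TensorProduct.assoc k k k H H (H ⊗[k] H)
    (Algebra.TensorProduct.map qh.comul (AlgHom.id k (H ⊗[k] H)) qh.assoc)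
  set W' := Algebra.TensorProduct.assoc k k k H H (H ⊗[k] H)
    (Algebra.TensorProduct.map qh.comul (AlgHom.id k (H ⊗[k] H)) qh.assocInv)
  have hW : W * W' = 1 := by rw [← map_mul, ← map_mul, qh.assoc_mul_inv, map_one, map_one]
  have hpentagon : Algebra.TensorProduct.map (AlgHom.id k H)
      (Algebra.TensorProduct.map (AlgHom.id k H) qh.comul) qh.assoc
        = ((1 : H) ⊗ₜ qh.assoc) * (P * (Y * W')) := by
    rw [← tensor_mul_assoc, ← tensor_mul_assoc, ← qh.pentagon, tensor_mul_assoc, hW, mul_one]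
  have hcancel : (leftContract qh.antipode qh.alpha ∘ₗ mulLeft k qh.assocInv) ∘ₗ
      mulLeft k qh.assoc = leftContract qh.antipode qh.alpha :=
    LinearMap.ext fun x => by simp [← mul_assoc, qh.inv_mul_assoc]
  rw [hpentagon, prefixMul_one_tmul_mul, hcancel, prefixMul_leftContract_map_assoc_mul,
    prefixMul_leftContract_assoc_tmul_one_mul, qh.isQuasiAntipode.assoc_antipode,
    qh.counitIdId_assocInv, ← Algebra.TensorProduct.one_def, mul_one]

theorem drinfeldCan_drinfeldInvAux (h : H) :
    drinfeldCan qh (drinfeldInvAux qh h) = (1 : H) ⊗ₜ h := by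
  have hcomm : (leftContract qh.antipode qh.alpha ∘ₗ mulLeft k qh.assocInv) ∘ₗ
      mulLeft k (Algebra.TensorProduct.map (AlgHom.id k H) qh.comul (qh.comul h))
        = mulLeft k ((1 : H) ⊗ₜ[k] h) ∘ₗ
          (leftContract qh.antipode qh.alpha ∘ₗ mulLeft k qh.assocInv) :=
    LinearMap.ext (leftContract_assocInv_mul_comul_comul qh h)
  rw [drinfeldInvAux_eq_rightContract, drinfeldCan_rightContract, map_mul,
    Algebra.TensorProduct.map_tmul, map_one, prefixMul_one_tmul_mul, hcomm,
    prefixMul_mulLeft_one_tmul, prefixMul_leftContract_assocInv_map_comul_assoc, mul_one]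

theorem rightInverse_drinfeldCanInv :
    Function.RightInverse (drinfeldCanInv qh) (drinfeldCan qh) := by
  intro t
  induction t using TensorProduct.induction_on with
  | zero => simp only [map_zero]
  | add u v hu hv => rw [map_add, map_add, hu, hv]
  | tmul g h =>
    rw [drinfeldCanInv_tmul, drinfeldCan_tmul_one_mul, drinfeldCan_drinfeldInvAux,
      Algebra.TensorProduct.tmul_mul_tmul, mul_one, one_mul]

end Pentagon

section Quotient
variable (qh : QuasiHopf k H) (ν : H →ₐ[k] Q) (comulQ : Q →ₐ[k] Q ⊗[k] Q)

theorem quotCan_tmul (p q : Q) :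
    quotCan qh ν comulQ (p ⊗ₜ q)
      = (p ⊗ₜ[k] (1 : Q)) * (Algebra.TensorProduct.map ν ν (drinfeldW qh) * comulQ q) := by
  simp only [quotCan, comp_apply, lTensor_tmul]
  exact rTensor_mul'_assoc_symm_tmul _ _

theorem map_comp_drinfeldCan
    (hcomul : ∀ h : H, comulQ (ν h) = Algebra.TensorProduct.map ν ν (qh.comul h)) :
    (Algebra.TensorProduct.map ν ν).toLinearMap ∘ₗ drinfeldCan qh
      = quotCan qh ν comulQ ∘ₗ (Algebra.TensorProduct.map ν ν).toLinearMap := by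
  refine TensorProduct.ext' fun g h => ?_
  simp only [comp_apply, AlgHom.toLinearMap_apply, drinfeldCan_tmul, map_mul,
    Algebra.TensorProduct.map_tmul, map_one, quotCan_tmul, hcomul]

end Quotient

theorem quotCan_bijective_general (qh : QuasiHopf k H) (ν : H →ₐ[k] Q)
    (hν : Function.Surjective ν) [FiniteDimensional k Q]
    (comulQ : Q →ₐ[k] Q ⊗[k] Q)
    (hcomul : ∀ h : H, comulQ (ν h) = (Algebra.TensorProduct.map ν ν) (qh.comul h)) :
    (Algebra.TensorProduct.map ν ν).toLinearMap ∘ₗ drinfeldCan qh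
        = quotCan qh ν comulQ ∘ₗ (Algebra.TensorProduct.map ν ν).toLinearMap ∧
      Function.Surjective (quotCan qh ν comulQ) ∧
      Function.Bijective (quotCan qh ν comulQ) := by
  have hsquare := map_comp_drinfeldCan qh ν comulQ hcomul
  have hsurj : Function.Surjective (quotCan qh ν comulQ) := by
    have h : Function.Surjective
        ((Algebra.TensorProduct.map ν ν).toLinearMap ∘ₗ drinfeldCan qh) :=
      (Algebra.TensorProduct.map_surjective ν ν hν hν).comp
        (rightInverse_drinfeldCanInv qh).surjective
    rw [hsquare, LinearMap.coe_comp] at h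
    exact h.of_comp
  exact ⟨hsquare, hsurj, LinearMap.injective_iff_surjective.mpr hsurj, hsurj⟩

/-- For a finite-dimensional quotient quasibialgebra `Q = H/I` of a
quasi-Hopf algebra `H`, the map `φ̄` induced by Drinfeld's canonical map `φ` satisfies
`(ν⊗ν)∘φ = φ̄∘(ν⊗ν)`; consequently `φ̄` is surjective, hence bijective. -/
theorem quotCan_bijective (qh : QuasiHopf k H) (ν : H →ₐ[k] Q)
    (hν : Function.Surjective ν) [FiniteDimensional k Q]
    (comulQ : Q →ₐ[k] Q ⊗[k] Q) (counitQ : Q →ₐ[k] k)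
    (hcomul : ∀ h : H, comulQ (ν h) = (Algebra.TensorProduct.map ν ν) (qh.comul h))
    (hcounit : ∀ h : H, counitQ (ν h) = qh.counit h) :
    (Algebra.TensorProduct.map ν ν).toLinearMap ∘ₗ drinfeldCan qh
        = quotCan qh ν comulQ ∘ₗ (Algebra.TensorProduct.map ν ν).toLinearMap ∧
      Function.Surjective (quotCan qh ν comulQ) ∧
      Function.Bijective (quotCan qh ν comulQ) :=
  quotCan_bijective_general qh ν hν comulQ hcomul
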